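/- Let n, m ≥ 2, r = n/m, and suppose the Behrens-Fisher cubic f has three distinct real roots μ₁ < μ₂ < μ₃. Then at most two of the corresponding critical points (μᵢ, (x̄−μᵢ)² + sX², (ȳ−μᵢ)² + sY²) can be local maxima of the log-likelihood ℓ; in particular, the middle root μ₂ corresponds to a critical point that is not a local maximum of the profile function μ ↦ ℓ(μ, (x̄−μ)²+sX², (ȳ−μ)²+sY²). -/

import Mathlib

/-!
Since the variances are set to their conditional maximisers, the profile log-likelihood is
`const - (n/2) log ((x̄-μ)² + sX²) - (m/2) log ((ȳ-μ)² + sY²)`. Its derivative has numerator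
`-m f(μ) = -(n+m)(μ-μ₁)(μ-μ₂)(μ-μ₃)`, which is positive on `(μ₂, μ₃)`, so the profile is strictly
increasing just to the right of `μ₂`. A local maximum of `ℓ` at the critical point over `μ₂` would
restrict to a local maximum of the profile along the continuous curve
`μ ↦ (μ, (x̄-μ)² + sX², (ȳ-μ)² + sY²)`.
-/

noncomputable def ell (n m : ℕ) (xbar ybar sX2 sY2 : ℝ) (μ σX2 σY2 : ℝ) : ℝ :=
  -((n + m : ℝ)/2) * Real.log (2*Real.pi)
  - ((n : ℝ)/2) * Real.log σX2 - ((m : ℝ)/2) * Real.log σY2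
  - ((n : ℝ)/2) * ((sX2 + (xbar - μ)^2) / σX2)
  - ((m : ℝ)/2) * ((sY2 + (ybar - μ)^2) / σY2)

open Set Filter Topology

theorem cubic_eq_mul_sub_mul_sub_mul_sub {R : Type*} [CommRing R] [IsDomain R]
    {a b c d x₁ x₂ x₃ : R} (h₁₂ : x₁ ≠ x₂) (h₁₃ : x₁ ≠ x₃) (h₂₃ : x₂ ≠ x₃)
    (h₁ : a * x₁ ^ 3 + b * x₁ ^ 2 + c * x₁ + d = 0)
    (h₂ : a * x₂ ^ 3 + b * x₂ ^ 2 + c * x₂ + d = 0)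
    (h₃ : a * x₃ ^ 3 + b * x₃ ^ 2 + c * x₃ + d = 0) (x : R) :
    a * x ^ 3 + b * x ^ 2 + c * x + d = a * (x - x₁) * (x - x₂) * (x - x₃) := by
  have e₁₂ : a * (x₁ ^ 2 + x₁ * x₂ + x₂ ^ 2) + b * (x₁ + x₂) + c = 0 :=
    (mul_eq_zero.1 (by linear_combination h₁ - h₂ : (x₁ - x₂) * _ = 0)).resolve_left
      (sub_ne_zero.2 h₁₂)
  have e₁₃ : a * (x₁ ^ 2 + x₁ * x₃ + x₃ ^ 2) + b * (x₁ + x₃) + c = 0 :=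
    (mul_eq_zero.1 (by linear_combination h₁ - h₃ : (x₁ - x₃) * _ = 0)).resolve_left
      (sub_ne_zero.2 h₁₃)
  have e₁₂₃ : a * (x₁ + x₂ + x₃) + b = 0 :=
    (mul_eq_zero.1 (by linear_combination e₁₂ - e₁₃ : (x₂ - x₃) * _ = 0)).resolve_left
      (sub_ne_zero.2 h₂₃)
  linear_combination h₁ + (x - x₁) * e₁₂ + (x ^ 2 - x₁ ^ 2 - (x - x₁) * (x₁ + x₂)) * e₁₂₃

theorem not_isLocalMax_of_strictMonoOn_Icc {α β : Type*} [TopologicalSpace α] [LinearOrder α]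
    [OrderTopology α] [DenselyOrdered α] [Preorder β] {f : α → β} {a b : α} (hab : a < b)
    (hf : StrictMonoOn f (Icc a b)) : ¬IsLocalMax f a := by
  intro hmax
  have : (𝓝[>] a).NeBot := nhdsGT_neBot_of_exists_gt ⟨b, hab⟩
  obtain ⟨x, hxa, hx⟩ := ((hmax.filter_mono nhdsWithin_le_nhds).and
    (Ioo_mem_nhdsGT hab)).exists
  exact (hf (left_mem_Icc.2 hab.le) (Ioo_subset_Icc_self hx) hx.1).not_ge hxa

def behrensFisherCubic (r xbar ybar sX2 sY2 μ : ℝ) : ℝ :=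
  (1 + r)*μ^3 - ((2*xbar + ybar) + r*(2*ybar + xbar))*μ^2
    + (xbar^2 + 2*(1+r)*xbar*ybar + r*ybar^2 + sX2 + r*sY2)*μ
    - (xbar^2*ybar + r*ybar^2*xbar + sX2*ybar + r*sY2*xbar)

theorem behrensFisherCubic_eq_mul_sub_mul_sub_mul_sub {r xbar ybar sX2 sY2 μ₁ μ₂ μ₃ : ℝ}
    (h₁₂ : μ₁ ≠ μ₂) (h₁₃ : μ₁ ≠ μ₃) (h₂₃ : μ₂ ≠ μ₃)
    (h₁ : behrensFisherCubic r xbar ybar sX2 sY2 μ₁ = 0)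
    (h₂ : behrensFisherCubic r xbar ybar sX2 sY2 μ₂ = 0)
    (h₃ : behrensFisherCubic r xbar ybar sX2 sY2 μ₃ = 0) (μ : ℝ) :
    behrensFisherCubic r xbar ybar sX2 sY2 μ = (1 + r) * (μ - μ₁) * (μ - μ₂) * (μ - μ₃) := by
  unfold behrensFisherCubic at *
  linear_combination cubic_eq_mul_sub_mul_sub_mul_sub (a := 1 + r)
    (b := -((2*xbar + ybar) + r*(2*ybar + xbar)))
    (c := xbar^2 + 2*(1+r)*xbar*ybar + r*ybar^2 + sX2 + r*sY2)
    (d := -(xbar^2*ybar + r*ybar^2*xbar + sX2*ybar + r*sY2*xbar)) h₁₂ h₁₃ h₂₃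
    (by linear_combination h₁) (by linear_combination h₂) (by linear_combination h₃) μ

theorem score_numerator_eq_neg_mul_behrensFisherCubic {n m : ℝ} (hm : m ≠ 0)
    (xbar ybar sX2 sY2 μ : ℝ) :
    n * (xbar - μ) * ((ybar - μ) ^ 2 + sY2) + m * (ybar - μ) * ((xbar - μ) ^ 2 + sX2) =
      -m * behrensFisherCubic (n / m) xbar ybar sX2 sY2 μ := by
  unfold behrensFisherCubic
  field_simp
  ring

section Profile

variable {n m : ℕ} {xbar ybar sX2 sY2 : ℝ}

theorem ell_profile_eq (hsX : 0 < sX2) (hsY : 0 < sY2) (μ : ℝ) :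
    ell n m xbar ybar sX2 sY2 μ ((xbar - μ) ^ 2 + sX2) ((ybar - μ) ^ 2 + sY2) =
      -((n + m : ℝ) / 2) * (Real.log (2 * Real.pi) + 1)
        - (n / 2 : ℝ) * Real.log ((xbar - μ) ^ 2 + sX2)
        - (m / 2 : ℝ) * Real.log ((ybar - μ) ^ 2 + sY2) := by
  have hu : (xbar - μ) ^ 2 + sX2 ≠ 0 := by positivity
  have hv : (ybar - μ) ^ 2 + sY2 ≠ 0 := by positivity
  rw [ell, add_comm sX2, add_comm sY2, div_self hu, div_self hv]
  ring

theorem hasDerivAt_ell_profile (hsX : 0 < sX2) (hsY : 0 < sY2) (μ : ℝ) :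
    HasDerivAt
      (fun μ => ell n m xbar ybar sX2 sY2 μ ((xbar - μ) ^ 2 + sX2) ((ybar - μ) ^ 2 + sY2))
      ((n * (xbar - μ) * ((ybar - μ) ^ 2 + sY2) + m * (ybar - μ) * ((xbar - μ) ^ 2 + sX2)) /
        (((xbar - μ) ^ 2 + sX2) * ((ybar - μ) ^ 2 + sY2))) μ := by
  have hu : (xbar - μ) ^ 2 + sX2 ≠ 0 := by positivity
  have hv : (ybar - μ) ^ 2 + sY2 ≠ 0 := by positivity
  have hdu : HasDerivAt (fun μ => (xbar - μ) ^ 2 + sX2) (-(2 * (xbar - μ))) μ := by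
    simpa using (((hasDerivAt_id μ).const_sub xbar).pow 2).add_const sX2
  have hdv : HasDerivAt (fun μ => (ybar - μ) ^ 2 + sY2) (-(2 * (ybar - μ))) μ := by
    simpa using (((hasDerivAt_id μ).const_sub ybar).pow 2).add_const sY2
  simp_rw [ell_profile_eq hsX hsY]
  refine ((((hdu.log hu).const_mul (n / 2 : ℝ)).const_sub
    (-((n + m : ℝ) / 2) * (Real.log (2 * Real.pi) + 1))).sub
    ((hdv.log hv).const_mul (m / 2 : ℝ))).congr_deriv ?_
  field_simp
  ring

end Profile

theorem middle_root_not_local_max_general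
    (n m : ℕ) (hm : 2 ≤ m)
    (xbar ybar sX2 sY2 : ℝ) (hsX : 0 < sX2) (hsY : 0 < sY2)
    (r : ℝ) (hr : r = (n : ℝ) / m)
    (μ₁ μ₂ μ₃ : ℝ) (h12 : μ₁ < μ₂) (h23 : μ₂ < μ₃)
    (hroot : ∀ μ ∈ ({μ₁, μ₂, μ₃} : Set ℝ),
      (1 + r)*μ^3 - ((2*xbar + ybar) + r*(2*ybar + xbar))*μ^2
      + (xbar^2 + 2*(1+r)*xbar*ybar + r*ybar^2 + sX2 + r*sY2)*μ
      - (xbar^2*ybar + r*ybar^2*xbar + sX2*ybar + r*sY2*xbar) = 0) :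
    ¬ (IsLocalMax (fun p : ℝ × ℝ × ℝ => ell n m xbar ybar sX2 sY2 p.1 p.2.1 p.2.2)
          (μ₁, (xbar - μ₁)^2 + sX2, (ybar - μ₁)^2 + sY2) ∧
       IsLocalMax (fun p : ℝ × ℝ × ℝ => ell n m xbar ybar sX2 sY2 p.1 p.2.1 p.2.2)
          (μ₂, (xbar - μ₂)^2 + sX2, (ybar - μ₂)^2 + sY2) ∧
       IsLocalMax (fun p : ℝ × ℝ × ℝ => ell n m xbar ybar sX2 sY2 p.1 p.2.1 p.2.2)
          (μ₃, (xbar - μ₃)^2 + sX2, (ybar - μ₃)^2 + sY2)) ∧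
    ¬ IsLocalMax
        (fun μ => ell n m xbar ybar sX2 sY2 μ ((xbar - μ)^2 + sX2) ((ybar - μ)^2 + sY2))
        μ₂ := by
  subst hr
  have hm₀ : (0 : ℝ) < m := Nat.cast_pos.2 (by omega)
  have hfactor := behrensFisherCubic_eq_mul_sub_mul_sub_mul_sub h12.ne (h12.trans h23).ne h23.ne
    (hroot μ₁ (by simp)) (hroot μ₂ (by simp)) (hroot μ₃ (by simp))
  have hprofile : ¬IsLocalMax
      (fun μ => ell n m xbar ybar sX2 sY2 μ ((xbar - μ)^2 + sX2) ((ybar - μ)^2 + sY2)) μ₂ := by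
    have hderiv := hasDerivAt_ell_profile (n := n) (m := m) (xbar := xbar) (ybar := ybar) hsX hsY
    refine not_isLocalMax_of_strictMonoOn_Icc h23 <| strictMonoOn_of_hasDerivWithinAt_pos
      (convex_Icc _ _) (fun x _ => (hderiv x).continuousAt.continuousWithinAt)
      (fun x _ => (hderiv x).hasDerivWithinAt) fun x hx => ?_
    rw [interior_Icc] at hx
    rw [score_numerator_eq_neg_mul_behrensFisherCubic hm₀.ne', hfactor]
    have hprod : (x - μ₁) * (x - μ₂) * (x - μ₃) < 0 :=
      mul_neg_of_pos_of_neg (mul_pos (by linarith [hx.1]) (sub_pos.2 hx.1)) (sub_neg.2 hx.2)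
    have hm₁ : 0 < m * (1 + n / m : ℝ) := by positivity
    exact div_pos (by nlinarith) (by positivity)
  refine ⟨fun ⟨_, h₂, _⟩ => hprofile ?_, hprofile⟩
  exact h₂.comp_continuous (g := fun μ => (μ, (xbar - μ)^2 + sX2, (ybar - μ)^2 + sY2)) (by fun_prop)

theorem middle_root_not_local_max
    (n m : ℕ) (hn : 2 ≤ n) (hm : 2 ≤ m)
    (xbar ybar sX2 sY2 : ℝ) (hsX : 0 < sX2) (hsY : 0 < sY2)
    (r : ℝ) (hr : r = (n : ℝ) / m)
    (μ₁ μ₂ μ₃ : ℝ) (h12 : μ₁ < μ₂) (h23 : μ₂ < μ₃)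
    (hroot : ∀ μ ∈ ({μ₁, μ₂, μ₃} : Set ℝ),
      (1 + r)*μ^3 - ((2*xbar + ybar) + r*(2*ybar + xbar))*μ^2
      + (xbar^2 + 2*(1+r)*xbar*ybar + r*ybar^2 + sX2 + r*sY2)*μ
      - (xbar^2*ybar + r*ybar^2*xbar + sX2*ybar + r*sY2*xbar) = 0) :
    ¬ (IsLocalMax (fun p : ℝ × ℝ × ℝ => ell n m xbar ybar sX2 sY2 p.1 p.2.1 p.2.2)
          (μ₁, (xbar - μ₁)^2 + sX2, (ybar - μ₁)^2 + sY2) ∧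
       IsLocalMax (fun p : ℝ × ℝ × ℝ => ell n m xbar ybar sX2 sY2 p.1 p.2.1 p.2.2)
          (μ₂, (xbar - μ₂)^2 + sX2, (ybar - μ₂)^2 + sY2) ∧
       IsLocalMax (fun p : ℝ × ℝ × ℝ => ell n m xbar ybar sX2 sY2 p.1 p.2.1 p.2.2)
          (μ₃, (xbar - μ₃)^2 + sX2, (ybar - μ₃)^2 + sY2)) ∧
    ¬ IsLocalMax
        (fun μ => ell n m xbar ybar sX2 sY2 μ ((xbar - μ)^2 + sX2) ((ybar - μ)^2 + sY2))
        μ₂ :=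
  middle_root_not_local_max_general n m hm xbar ybar sX2 sY2 hsX hsY r hr μ₁ μ₂ μ₃ h12 h23 hroot
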